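/- arXiv:1603.09013 — 3 statements merged into one kernel-verified Lean document; each statement's English description precedes it below -/
import Mathlib

section
/- Let 𝐢^A = (1,2,…,n)(1,2,…,n−1)⋯(1,2)(1) and set β_k = s_{i_1}⋯s_{i_{k−1}}(α_{i_k}) for 1 ≤ k ≤ N = n(n+1)/2. Then the sequence β_1, …, β_N lists each positive root α_{i,j} (1 ≤ i ≤ j ≤ n) exactly once, in lexicographic order of the index pairs: β_k = α_{i,j} precedes β_l = α_{i′,j′} if and only if i < i′, or i = i′ and j < j′. Explicitly, the induced order is α_{1,1} ≺ α_{1,2} ≺ ⋯ ≺ α_{1,n} ≺ α_{2,2} ≺ ⋯ ≺ α_{2,n} ≺ ⋯ ≺ α_{n,n}. -/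
open scoped Classical

noncomputable section

/-- Standard basis vector `e i` (1-based coordinates, ambient `ℤ^(n+1)` sits inside `ℕ → ℤ`). -/
def stdE (i : ℕ) : ℕ → ℤ := fun j => if j = i then 1 else 0

/-- Type `A_n` simple root `α_i = e_i - e_(i+1)`. -/
def alphaA (i : ℕ) : ℕ → ℤ := stdE i - stdE (i+1)

/-- Positive root `α_(i,j) = α_i + ⋯ + α_j = e_i - e_(j+1)`. -/
def rootA (i j : ℕ) : ℕ → ℤ := stdE i - stdE (j+1)

/-- `β` is a positive root of type `A_n`. -/
def PosRootA (n : ℕ) (β : ℕ → ℤ) : Prop :=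
  ∃ i j, 1 ≤ i ∧ i ≤ j ∧ j ≤ n ∧ β = rootA i j

/-- Simple transposition `s_i = (i, i+1)`. -/
def sA (i : ℕ) : Equiv.Perm ℕ := Equiv.swap i (i+1)

/-- Product `s_(i₁) ⋯ s_(i_N)` of the simple transpositions of a word. -/
def wordProdA (w : List ℕ) : Equiv.Perm ℕ := (w.map sA).prod

/-- The reversal permutation `w₀ : k ↦ n+2-k` of `{1,…,n+1}`. -/
def w0A (n : ℕ) : Equiv.Perm ℕ :=
  Function.Involutive.toPerm (fun k => if 1 ≤ k ∧ k ≤ n+1 then n+2-k else k)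
    (by intro k; dsimp only; split_ifs <;> omega)

/-- A permutation of coordinate indices acts on vectors by permuting coordinates. -/
def permAct (σ : Equiv.Perm ℕ) (v : ℕ → ℤ) : ℕ → ℤ := fun j => v (σ⁻¹ j)

/-- The induced root sequence `β_k = s_(i₁)⋯s_(i_(k-1)) (α_(i_k))` of a word (0-indexed). -/
def rootSeqA (w : List ℕ) : List (ℕ → ℤ) :=
  (List.range w.length).map fun k => permAct (wordProdA (w.take k)) (alphaA (w.getD k 0))

/-- The word `𝐢^A = (1,2,…,n)(1,2,…,n-1)⋯(1,2)(1)`. -/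
def wordA (n : ℕ) : List ℕ :=
  ((List.range n).reverse).flatMap fun m => (List.range (m+1)).map (· + 1)

/-- `w` is a reduced word for the longest element `w₀` of `S_(n+1)`. -/
def isReducedWordA (n : ℕ) (w : List ℕ) : Prop :=
  (∀ i ∈ w, 1 ≤ i ∧ i ≤ n) ∧ w.length = n * (n+1) / 2 ∧ wordProdA w = w0A n

/-- Standard inner product on `ℤ^(n+1)` (coordinates `1,…,n+1`; index `0` unused). -/
def ipA (n : ℕ) (v u : ℕ → ℤ) : ℤ := ∑ j ∈ Finset.range (n+2), v j * u j

/-- The list of positive roots `α_(i,j)` of type `A_n` in lexicographic order of `(i,j)`. -/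
def lexListA (n : ℕ) : List (ℕ → ℤ) :=
  (List.range n).flatMap fun i' => (List.range (n - i')).map fun d => rootA (i'+1) (i'+1+d)

/-! The word `𝐢^A` for `n + 1` is the block `(1, 2, …, n + 1)` followed by `𝐢^A` for `n`.
The block contributes `α_{1,1}, …, α_{1,n+1}`, and its product `s₁ ⋯ s_{n+1}` is the cycle
`k ↦ k + 1` on `{1, …, n + 1}`, `n + 2 ↦ 1`, which shifts `α_{i,j}` to `α_{i+1,j+1}` for `j ≤ n`.
So the root sequence of `𝐢^A` satisfies the same recursion as the lexicographic list of
positive roots, and the two agree by induction on `n`. -/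

lemma permAct_mul (σ τ : Equiv.Perm ℕ) (v : ℕ → ℤ) :
    permAct (σ * τ) v = permAct σ (permAct τ v) := by
  funext j
  simp [permAct, mul_inv_rev]

lemma permAct_stdE (σ : Equiv.Perm ℕ) (i : ℕ) : permAct σ (stdE i) = stdE (σ i) := by
  funext j
  simp only [permAct, stdE, Equiv.Perm.inv_eq_iff_eq]

lemma permAct_rootA (σ : Equiv.Perm ℕ) (i j : ℕ) :
    permAct σ (rootA i j) = stdE (σ i) - stdE (σ (j + 1)) := by
  rw [← permAct_stdE, ← permAct_stdE]
  rfl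

lemma rootA_injective {i j i' j' : ℕ} (hij : i ≤ j) (hij' : i' ≤ j')
    (h : rootA i j = rootA i' j') : i = i' ∧ j = j' := by
  have hi := congrFun h i
  have hj := congrFun h (j + 1)
  simp only [rootA, Pi.sub_apply, stdE] at hi hj
  split_ifs at hi hj <;> omega

lemma wordProdA_append (u v : List ℕ) : wordProdA (u ++ v) = wordProdA u * wordProdA v := by
  simp [wordProdA]

lemma rootSeqA_append (u v : List ℕ) :
    rootSeqA (u ++ v) = rootSeqA u ++ (rootSeqA v).map (permAct (wordProdA u)) := by
  unfold rootSeqA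
  rw [List.length_append, List.range_add, List.map_append, List.map_map, List.map_map]
  congr 1
  · refine List.map_congr_left fun k hk => ?_
    rw [List.mem_range] at hk
    rw [List.take_append_of_le_length hk.le, List.getD_append _ _ _ _ hk]
  · refine List.map_congr_left fun k _ => ?_
    rw [Function.comp_apply, Function.comp_apply, List.take_append, wordProdA_append, permAct_mul,
      List.getD_append_right _ _ _ _ (Nat.le_add_right _ _), Nat.add_sub_cancel_left,
      List.take_of_length_le (Nat.le_add_right _ _)]

def blockA (m : ℕ) : List ℕ := (List.range m).map (· + 1)

lemma wordA_succ (n : ℕ) : wordA (n + 1) = blockA (n + 1) ++ wordA n := by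
  simp [wordA, blockA, List.range_succ]

lemma wordProdA_blockA_apply (m j : ℕ) :
    wordProdA (blockA m) j = if j = m + 1 then 1 else if 1 ≤ j ∧ j ≤ m then j + 1 else j := by
  induction m generalizing j with
  | zero =>
    simp only [blockA, wordProdA, List.range_zero, List.map_nil, List.prod_nil, Equiv.Perm.one_apply]
    split_ifs <;> omega
  | succ m ih =>
    have hblock : blockA (m + 1) = blockA m ++ [m + 1] := by simp [blockA, List.range_succ]
    rw [hblock, wordProdA_append, Equiv.Perm.mul_apply]
    simp only [wordProdA, sA, List.map_cons, List.map_nil, List.prod_cons, List.prod_nil, mul_one,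
      Equiv.swap_apply_def] at ih ⊢
    split_ifs <;> simp_all <;> omega

lemma rootSeqA_blockA (m : ℕ) :
    rootSeqA (blockA m) = (List.range m).map fun d => rootA 1 (1 + d) := by
  unfold rootSeqA
  rw [show (blockA m).length = m by simp [blockA]]
  refine List.map_congr_left fun k hk => ?_
  rw [List.mem_range] at hk
  have htake : (blockA m).take k = blockA k := by
    simp [blockA, ← List.map_take, List.take_range, Nat.min_eq_left hk.le]
  have hget : (blockA m).getD k 0 = k + 1 := by
    simp [blockA, List.getD_eq_getElem?_getD, hk]
  rw [htake, hget, alphaA, ← rootA, permAct_rootA, wordProdA_blockA_apply,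
    wordProdA_blockA_apply, rootA]
  congr 2 <;> split_ifs <;> omega

lemma permAct_wordProdA_blockA_rootA {n i j : ℕ} (hi : 1 ≤ i) (hij : i ≤ j) (hj : j ≤ n) :
    permAct (wordProdA (blockA (n + 1))) (rootA i j) = rootA (i + 1) (j + 1) := by
  rw [permAct_rootA, wordProdA_blockA_apply, wordProdA_blockA_apply, rootA]
  congr 2 <;> split_ifs <;> omega

lemma lexListA_succ (n : ℕ) :
    lexListA (n + 1) = ((List.range (n + 1)).map fun d => rootA 1 (1 + d)) ++
      (lexListA n).map (permAct (wordProdA (blockA (n + 1)))) := by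
  rw [lexListA, lexListA, List.range_succ_eq_map, List.flatMap_cons, List.flatMap_map,
    List.map_flatMap, Nat.sub_zero, ← List.range_succ_eq_map]
  congr 1
  refine List.flatMap_congr fun i' hi' => ?_
  rw [List.mem_range] at hi'
  rw [show n + 1 - (i' + 1) = n - i' by omega, List.map_map]
  refine List.map_congr_left fun d hd => ?_
  rw [List.mem_range] at hd
  rw [Function.comp_apply, permAct_wordProdA_blockA_rootA (by omega) (by omega) (by omega)]
  congr 1
  omega

lemma rootSeqA_wordA (n : ℕ) : rootSeqA (wordA n) = lexListA n := by
  induction n with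
  | zero => rfl
  | succ n ih => rw [wordA_succ, rootSeqA_append, rootSeqA_blockA, ih, lexListA_succ]

lemma nodup_lexListA (n : ℕ) : (lexListA n).Nodup := by
  refine List.nodup_flatMap.2 ⟨fun i' _ => ?_, ?_⟩
  · refine List.nodup_range.map_on fun d _ e _ h => ?_
    exact Nat.add_left_cancel (rootA_injective (by omega) (by omega) h).2
  · refine List.nodup_range.pairwise_of_forall_ne fun i' _ k _ hne => ?_
    simp only [Function.onFun, List.disjoint_left, List.mem_map]
    rintro _ ⟨d, -, rfl⟩ ⟨e, -, h⟩
    exact hne (by have := (rootA_injective (by omega) (by omega) h).1; omega)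

lemma mem_lexListA {n : ℕ} {β : ℕ → ℤ} : β ∈ lexListA n ↔ PosRootA n β := by
  simp only [lexListA, List.mem_flatMap, List.mem_map, List.mem_range, PosRootA]
  constructor
  · rintro ⟨i', hi', d, hd, rfl⟩
    exact ⟨i' + 1, i' + 1 + d, by omega, by omega, by omega, rfl⟩
  · rintro ⟨i, j, hi, hij, hj, rfl⟩
    refine ⟨i - 1, by omega, j - i, by omega, ?_⟩
    rw [Nat.sub_add_cancel hi, Nat.add_sub_cancel' hij]

theorem statement1_general (n : ℕ) :
    (rootSeqA (wordA n)).Nodup ∧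
    (∀ β, β ∈ rootSeqA (wordA n) ↔ PosRootA n β) ∧
    rootSeqA (wordA n) = lexListA n := by
  rw [rootSeqA_wordA]
  exact ⟨nodup_lexListA n, fun _ => mem_lexListA, rfl⟩

/-- The induced root sequence of `𝐢^A` lists each positive root exactly once,
in lexicographic order of the index pairs. -/
theorem statement1 (n : ℕ) (hn : 1 ≤ n) :
    (rootSeqA (wordA n)).Nodup ∧
    (∀ β, β ∈ rootSeqA (wordA n) ↔ PosRootA n β) ∧
    rootSeqA (wordA n) = lexListA n :=
  statement1_general n

end
end

section
/- Papi's theorem in type A_n: the assignment sending a reduced word 𝐢 = (i_1,…,i_N) for the reversal w₀ in S_{n+1} to the total order β_1 ≺ β_2 ≺ ⋯ ≺ β_N on positive roots, where β_k = s_{i_1}⋯s_{i_{k−1}}(α_{i_k}), is a bijection from the set of reduced words for w₀ onto the set of convex total orders on the positive roots of type A_n. -/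
/-!
Encode the positive root `e_p - e_q` by the pair `(p, q)` and a permutation `σ` by its inversion
set, the positive roots sent to negative ones by `σ⁻¹`. Right multiplication by `s_i` adds or
removes the single root `± σ (α_i)`, so along a word whose length is the number `N` of inversions
of `w₀` the inversion sets of the prefixes grow by exactly `β_1, β_2, …`, one root at a time.
Inversion sets are closed and coclosed under addition of roots, which makes the induced order
convex; and the prefix products, hence the letters, are recovered from the `β_k`.

Conversely, a reduced word is built from a convex order letter by letter. If the inversion set of
the current prefix product `σ` consists of the first `k` roots, convexity forces the next root
`e_p - e_q` to satisfy `σ⁻¹ q = σ⁻¹ p + 1`, i.e. to be `σ (α_i)`, and appending `i` keeps this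
invariant. At the end every positive root is an inversion, and a permutation is determined by its
inversion set, so the product is `w₀`.
-/

open scoped Classical

noncomputable section

/-- A list `L` encodes a convex total order on the positive roots of type `A_n`:
it enumerates each positive root exactly once, and whenever the entry at position `b`
is the sum of the entries at positions `a` and `c`, position `b` lies strictly between
`a` and `c`. -/
def isConvexEnumA (n : ℕ) (L : List (ℕ → ℤ)) : Prop :=
  L.Nodup ∧ (∀ β, β ∈ L ↔ PosRootA n β) ∧
  ∀ a b c : Fin L.length, L.get b = L.get a + L.get c →
    ((a < b ∧ b < c) ∨ (c < b ∧ b < a))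

def pairRoot (pq : ℕ × ℕ) : ℕ → ℤ := stdE pq.1 - stdE pq.2

lemma permAct_pairRoot (σ : Equiv.Perm ℕ) (pq : ℕ × ℕ) :
    permAct σ (pairRoot pq) = pairRoot (σ pq.1, σ pq.2) := by
  simp only [pairRoot, ← permAct_stdE]
  rfl

lemma alphaA_eq_pairRoot (i : ℕ) : alphaA i = pairRoot (i, i + 1) := rfl

lemma pairRoot_injOn : {pq : ℕ × ℕ | pq.1 ≠ pq.2}.InjOn pairRoot := by
  rintro ⟨a, b⟩ hab ⟨c, d⟩ hcd h
  have ha := congrFun h a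
  have hb := congrFun h b
  simp only [Set.mem_ofPred_eq] at hab hcd
  simp only [pairRoot, Pi.sub_apply, stdE] at ha hb
  simp only [Prod.mk.injEq]
  split_ifs at ha hb <;> omega

lemma pairRoot_eq_add {a b c d p q : ℕ} (hab : a < b) (hcd : c < d) (hpq : p < q)
    (h : pairRoot (p, q) = pairRoot (a, b) + pairRoot (c, d)) :
    (b = c ∧ p = a ∧ q = d) ∨ (d = a ∧ p = c ∧ q = b) := by
  by_cases hbc : b = c
  · subst hbc
    have : pairRoot (p, q) = pairRoot (a, d) := by rw [h, pairRoot, pairRoot, pairRoot]; abel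
    have := pairRoot_injOn hpq.ne (show a ≠ d by omega) this
    simp_all
  by_cases hda : d = a
  · subst hda
    have : pairRoot (p, q) = pairRoot (c, b) := by rw [h, pairRoot, pairRoot, pairRoot]; abel
    have := pairRoot_injOn hpq.ne (show c ≠ b by omega) this
    simp_all
  have hb := congrFun h b
  have hd := congrFun h d
  simp only [pairRoot, Pi.add_apply, Pi.sub_apply, stdE] at hb hd
  split_ifs at hb hd <;> omega

lemma posRootA_iff {n : ℕ} {β : ℕ → ℤ} :
    PosRootA n β ↔ ∃ p q, 1 ≤ p ∧ p < q ∧ q ≤ n + 1 ∧ β = pairRoot (p, q) := by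
  constructor
  · rintro ⟨i, j, hi, hij, hj, rfl⟩
    exact ⟨i, j + 1, hi, by omega, by omega, rfl⟩
  · rintro ⟨p, q, hp, hpq, hq, rfl⟩
    refine ⟨p, q - 1, hp, by omega, by omega, ?_⟩
    rw [rootA, Nat.sub_add_cancel (by omega)]
    rfl

def symGroupA (n : ℕ) : Subgroup (Equiv.Perm ℕ) :=
  fixingSubgroup (Equiv.Perm ℕ) (Set.Icc 1 (n + 1))ᶜ

lemma mem_symGroupA_iff {n : ℕ} {σ : Equiv.Perm ℕ} :
    σ ∈ symGroupA n ↔ ∀ j, ¬(1 ≤ j ∧ j ≤ n + 1) → σ j = j := by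
  simp [symGroupA, mem_fixingSubgroup_iff, Equiv.Perm.smul_def]

lemma apply_mem_Icc_iff {n : ℕ} {σ : Equiv.Perm ℕ} (hσ : σ ∈ symGroupA n) (j : ℕ) :
    (1 ≤ σ j ∧ σ j ≤ n + 1) ↔ (1 ≤ j ∧ j ≤ n + 1) := by
  rw [mem_symGroupA_iff] at hσ
  constructor
  · intro h
    by_contra hj
    rw [hσ j hj] at h
    exact hj h
  · intro hj
    by_contra h
    rw [σ.injective (hσ _ h)] at h
    exact h hj

lemma inv_mem_Icc_iff {n : ℕ} {σ : Equiv.Perm ℕ} (hσ : σ ∈ symGroupA n) (j : ℕ) :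
    (1 ≤ σ⁻¹ j ∧ σ⁻¹ j ≤ n + 1) ↔ (1 ≤ j ∧ j ≤ n + 1) :=
  apply_mem_Icc_iff (inv_mem hσ) j

lemma sA_apply (i x : ℕ) : sA i x = if x = i then i + 1 else if x = i + 1 then i else x := by
  simp [sA, Equiv.swap_apply_def]

lemma sA_mem_symGroupA {n i : ℕ} (hi : 1 ≤ i ∧ i ≤ n) : sA i ∈ symGroupA n := by
  rw [mem_symGroupA_iff]
  intro j hj
  rw [sA_apply]
  split_ifs <;> omega

lemma wordProdA_mem_symGroupA {n : ℕ} {w : List ℕ} (hw : ∀ i ∈ w, 1 ≤ i ∧ i ≤ n) :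
    wordProdA w ∈ symGroupA n :=
  Subgroup.list_prod_mem _ (by simpa using fun i hi => sA_mem_symGroupA (hw i hi))

lemma w0A_mem_symGroupA (n : ℕ) : w0A n ∈ symGroupA n := by
  rw [mem_symGroupA_iff]
  intro j hj
  exact if_neg hj

/-- `(p, q) ∈ invPairs n σ` iff `σ⁻¹` sends the positive root `e_p - e_q` to a negative root. -/
def invPairs (n : ℕ) (σ : Equiv.Perm ℕ) : Finset (ℕ × ℕ) :=
  (Finset.Icc 1 (n + 1) ×ˢ Finset.Icc 1 (n + 1)).filter fun pq =>
    pq.1 < pq.2 ∧ σ⁻¹ pq.2 < σ⁻¹ pq.1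

lemma mem_invPairs {n : ℕ} {σ : Equiv.Perm ℕ} {p q : ℕ} :
    (p, q) ∈ invPairs n σ ↔ 1 ≤ p ∧ q ≤ n + 1 ∧ p < q ∧ σ⁻¹ q < σ⁻¹ p := by
  simp only [invPairs, Finset.mem_filter, Finset.mem_product, Finset.mem_Icc]
  omega

lemma invPairs_one (n : ℕ) : invPairs n 1 = ∅ := by
  ext ⟨p, q⟩
  simp only [mem_invPairs, inv_one, Equiv.Perm.one_apply, Finset.notMem_empty, iff_false]
  omega

lemma w0A_apply (n k : ℕ) : w0A n k = if 1 ≤ k ∧ k ≤ n + 1 then n + 2 - k else k := rfl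

lemma mem_invPairs_w0A {n p q : ℕ} : (p, q) ∈ invPairs n (w0A n) ↔ 1 ≤ p ∧ p < q ∧ q ≤ n + 1 := by
  have hinv : ∀ k, (w0A n)⁻¹ k = w0A n k := fun k => by
    rw [Equiv.Perm.inv_eq_iff_eq, w0A_apply, w0A_apply]
    split_ifs <;> omega
  simp only [mem_invPairs, hinv, w0A_apply]
  split_ifs <;> omega

lemma card_invPairs_w0A (n : ℕ) : (invPairs n (w0A n)).card = n * (n + 1) / 2 := by
  have hpairs : invPairs n (w0A n) =
      (Finset.range (n + 2)).biUnion fun q => Finset.Ico 1 q ×ˢ {q} := by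
    ext ⟨p, q⟩
    simp only [mem_invPairs_w0A, Finset.mem_biUnion, Finset.mem_range, Finset.mem_product,
      Finset.mem_Ico, Finset.mem_singleton]
    constructor
    · rintro ⟨hp, hpq, hq⟩
      exact ⟨q, by omega, ⟨hp, hpq⟩, rfl⟩
    · rintro ⟨q, hq, hp, rfl⟩
      omega
  rw [hpairs, Finset.card_biUnion]
  · simp only [Finset.card_product, Nat.card_Ico, Finset.card_singleton, mul_one]
    rw [Finset.sum_range_succ']
    simp [Finset.sum_range_id, mul_comm]
  · intro q _ q' _ hqq'
    simp only [Function.onFun, Finset.disjoint_left, Finset.mem_product, Finset.mem_singleton]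
    rintro _ ⟨-, h⟩ ⟨-, h'⟩
    exact hqq' (h.symm.trans h')

lemma invPairs_trans {n : ℕ} {σ : Equiv.Perm ℕ} {p m q : ℕ}
    (h₁ : (p, m) ∈ invPairs n σ) (h₂ : (m, q) ∈ invPairs n σ) : (p, q) ∈ invPairs n σ := by
  simp only [mem_invPairs] at *
  omega

lemma mem_invPairs_or_of_lt_of_lt {n : ℕ} {σ : Equiv.Perm ℕ} {p m q : ℕ}
    (h : (p, q) ∈ invPairs n σ) (hpm : p < m) (hmq : m < q) :
    (p, m) ∈ invPairs n σ ∨ (m, q) ∈ invPairs n σ := by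
  simp only [mem_invPairs] at *
  omega

lemma invPairs_mul_sA {n : ℕ} {σ : Equiv.Perm ℕ} (hσ : σ ∈ symGroupA n) {i : ℕ}
    (hi : 1 ≤ i ∧ i ≤ n) (hlt : σ i < σ (i + 1)) :
    invPairs n (σ * sA i) = insert (σ i, σ (i + 1)) (invPairs n σ) := by
  ext ⟨p, q⟩
  obtain ⟨a, rfl⟩ := σ.surjective p
  obtain ⟨b, rfl⟩ := σ.surjective q
  have hsA : (sA i)⁻¹ = sA i := Equiv.swap_inv _ _
  have hσi := (apply_mem_Icc_iff hσ i).2 (by omega)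
  have hσi' := (apply_mem_Icc_iff hσ (i + 1)).2 (by omega)
  simp only [Finset.mem_insert, mem_invPairs, mul_inv_rev, hsA, Equiv.Perm.mul_apply,
    Equiv.Perm.coe_inv, Equiv.symm_apply_apply, Prod.mk.injEq, σ.injective.eq_iff, sA_apply]
  split_ifs <;> subst_vars <;> omega

lemma pair_apply_notMem_invPairs (n : ℕ) (σ : Equiv.Perm ℕ) (i : ℕ) :
    (σ i, σ (i + 1)) ∉ invPairs n σ := by
  simp [mem_invPairs]

lemma card_invPairs_mul_sA_of_lt {n : ℕ} {σ : Equiv.Perm ℕ} (hσ : σ ∈ symGroupA n) {i : ℕ}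
    (hi : 1 ≤ i ∧ i ≤ n) (hlt : σ i < σ (i + 1)) :
    (invPairs n (σ * sA i)).card = (invPairs n σ).card + 1 := by
  rw [invPairs_mul_sA hσ hi hlt, Finset.card_insert_of_notMem (pair_apply_notMem_invPairs n σ i)]

lemma card_invPairs_mul_sA_of_gt {n : ℕ} {σ : Equiv.Perm ℕ} (hσ : σ ∈ symGroupA n) {i : ℕ}
    (hi : 1 ≤ i ∧ i ≤ n) (hgt : σ (i + 1) < σ i) :
    (invPairs n (σ * sA i)).card + 1 = (invPairs n σ).card := by
  have hsA : σ * sA i * sA i = σ := by simp [mul_assoc, sA]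
  have hτ : σ * sA i ∈ symGroupA n := mul_mem hσ (sA_mem_symGroupA hi)
  have := card_invPairs_mul_sA_of_lt hτ hi (by simpa [sA_apply] using hgt)
  rwa [hsA, eq_comm] at this

lemma card_invPairs_mul_sA_le {n : ℕ} {σ : Equiv.Perm ℕ} (hσ : σ ∈ symGroupA n) {i : ℕ}
    (hi : 1 ≤ i ∧ i ≤ n) : (invPairs n (σ * sA i)).card ≤ (invPairs n σ).card + 1 := by
  rcases lt_or_gt_of_ne (σ.injective.ne (show i ≠ i + 1 by omega)) with hlt | hgt
  · exact (card_invPairs_mul_sA_of_lt hσ hi hlt).le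
  · have := card_invPairs_mul_sA_of_gt hσ hi hgt
    omega

lemma card_filter_inv_lt {n : ℕ} {σ : Equiv.Perm ℕ} (hσ : σ ∈ symGroupA n) {p : ℕ}
    (hp : 1 ≤ p ∧ p ≤ n + 1) :
    ((Finset.Icc 1 (n + 1)).filter fun q => σ⁻¹ q < σ⁻¹ p).card = σ⁻¹ p - 1 := by
  have hp' := (inv_mem_Icc_iff hσ p).2 hp
  rw [← Nat.card_Ico 1 (σ⁻¹ p)]
  refine Finset.card_nbij' (σ⁻¹ ·) (σ ·) (fun q hq => ?_) (fun j hj => ?_)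
    (fun q _ => by simp) (fun j _ => by simp)
  · simp only [Finset.coe_filter, Finset.mem_Icc, Set.mem_ofPred_eq, Finset.coe_Ico,
      Set.mem_Ico] at hq ⊢
    have := (inv_mem_Icc_iff hσ q).2 hq.1
    omega
  · simp only [Finset.coe_filter, Finset.mem_Icc, Set.mem_ofPred_eq, Finset.coe_Ico,
      Set.mem_Ico] at hj ⊢
    exact ⟨(apply_mem_Icc_iff hσ j).2 (by omega), by simpa using hj.2⟩

lemma inv_apply_eq_card {n : ℕ} {σ : Equiv.Perm ℕ} (hσ : σ ∈ symGroupA n) {p : ℕ}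
    (hp : 1 ≤ p ∧ p ≤ n + 1) :
    σ⁻¹ p = ((Finset.Icc 1 (n + 1)).filter fun q =>
      (q < p ∧ (q, p) ∉ invPairs n σ) ∨ (p, q) ∈ invPairs n σ).card + 1 := by
  have hfilter : ((Finset.Icc 1 (n + 1)).filter fun q =>
      (q < p ∧ (q, p) ∉ invPairs n σ) ∨ (p, q) ∈ invPairs n σ) =
      (Finset.Icc 1 (n + 1)).filter fun q => σ⁻¹ q < σ⁻¹ p := by
    refine Finset.filter_congr fun q hq => ?_
    rw [Finset.mem_Icc] at hq
    simp only [mem_invPairs]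
    rcases lt_trichotomy q p with h | rfl | h
    · have := (σ⁻¹).injective.ne h.ne
      omega
    · omega
    · have := (σ⁻¹).injective.ne h.ne
      omega
  have := (inv_mem_Icc_iff hσ p).2 hp
  rw [hfilter, card_filter_inv_lt hσ hp]
  omega

lemma eq_of_invPairs_eq {n : ℕ} {σ τ : Equiv.Perm ℕ} (hσ : σ ∈ symGroupA n)
    (hτ : τ ∈ symGroupA n) (h : invPairs n σ = invPairs n τ) : σ = τ := by
  rw [← inv_inj]
  ext p
  by_cases hp : 1 ≤ p ∧ p ≤ n + 1
  · rw [inv_apply_eq_card hσ hp, inv_apply_eq_card hτ hp, h]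
  · rw [mem_symGroupA_iff.1 (inv_mem hσ) p hp, mem_symGroupA_iff.1 (inv_mem hτ) p hp]

lemma wordProdA_take_succ {w : List ℕ} {k : ℕ} (hk : k < w.length) :
    wordProdA (w.take (k + 1)) = wordProdA (w.take k) * sA (w.getD k 0) := by
  rw [List.take_add_one, List.getElem?_eq_getElem hk, Option.toList_some, wordProdA_append,
    List.getD_eq_getElem _ _ hk]
  simp [wordProdA]

lemma List.getD_mem {w : List ℕ} {k : ℕ} (hk : k < w.length) : w.getD k 0 ∈ w := by
  rw [List.getD_eq_getElem _ _ hk]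
  exact List.getElem_mem hk

def rootPair (w : List ℕ) (k : ℕ) : ℕ × ℕ :=
  (wordProdA (w.take k) (w.getD k 0), wordProdA (w.take k) (w.getD k 0 + 1))

lemma rootSeqA_eq_map (w : List ℕ) :
    rootSeqA w = (List.range w.length).map fun k => pairRoot (rootPair w k) := by
  simp only [rootSeqA, alphaA_eq_pairRoot, permAct_pairRoot, rootPair]

lemma rootSeqA_length (w : List ℕ) : (rootSeqA w).length = w.length := by
  simp [rootSeqA]

lemma rootSeqA_concat (u : List ℕ) (i : ℕ) :
    rootSeqA (u ++ [i]) = rootSeqA u ++ [permAct (wordProdA u) (alphaA i)] := by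
  simp only [rootSeqA, List.length_append, List.length_singleton, List.range_succ, List.map_append,
    List.map_singleton, List.take_left']
  congr 1
  · refine List.map_congr_left fun k hk => ?_
    rw [List.mem_range] at hk
    rw [List.take_append_of_le_length hk.le, List.getD_append _ _ _ _ hk]
  · simp

lemma eq_self_of_step_le_one {c : ℕ → ℕ} {N : ℕ} (h0 : c 0 = 0)
    (hstep : ∀ k < N, c (k + 1) ≤ c k + 1) (hN : c N = N) {k : ℕ} (hk : k ≤ N) : c k = k := by
  have hup : ∀ j ≤ N, c j ≤ j := by
    intro j hj
    induction j with
    | zero => omega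
    | succ j ih =>
      have := hstep j (by omega)
      have := ih (by omega)
      omega
  have hdown : ∀ j, k + j ≤ N → c (k + j) ≤ c k + j := by
    intro j
    induction j with
    | zero => simp
    | succ j ih =>
      intro hj
      have := hstep (k + j) (by omega)
      have := ih (by omega)
      rw [← add_assoc]
      omega
  have := hdown (N - k) (by omega)
  rw [Nat.add_sub_cancel' hk, hN] at this
  have := hup k hk
  omega

def IsReducedA (n : ℕ) (w : List ℕ) : Prop :=
  (∀ i ∈ w, 1 ≤ i ∧ i ≤ n) ∧ (invPairs n (wordProdA w)).card = w.length

namespace IsReducedA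

variable {n : ℕ} {w : List ℕ}

lemma wordProdA_take_mem (h : IsReducedA n w) (k : ℕ) : wordProdA (w.take k) ∈ symGroupA n :=
  wordProdA_mem_symGroupA fun i hi => h.1 i (List.mem_of_mem_take hi)

lemma card_invPairs_take (h : IsReducedA n w) {k : ℕ} (hk : k ≤ w.length) :
    (invPairs n (wordProdA (w.take k))).card = k := by
  refine eq_self_of_step_le_one (c := fun k => (invPairs n (wordProdA (w.take k))).card)
    (by simp [wordProdA, invPairs_one]) (fun j hj => ?_) (by simpa using h.2) hk
  rw [wordProdA_take_succ hj]
  exact card_invPairs_mul_sA_le (h.wordProdA_take_mem j) (h.1 _ (List.getD_mem hj))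

lemma rootPair_lt (h : IsReducedA n w) {k : ℕ} (hk : k < w.length) :
    (rootPair w k).1 < (rootPair w k).2 := by
  rcases lt_or_gt_of_ne ((wordProdA (w.take k)).injective.ne
    (show w.getD k 0 ≠ w.getD k 0 + 1 by omega)) with hlt | hgt
  · exact hlt
  · have := card_invPairs_mul_sA_of_gt (h.wordProdA_take_mem k) (h.1 _ (List.getD_mem hk)) hgt
    rw [← wordProdA_take_succ hk, h.card_invPairs_take hk, h.card_invPairs_take hk.le] at this
    omega

lemma invPairs_take_succ (h : IsReducedA n w) {k : ℕ} (hk : k < w.length) :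
    invPairs n (wordProdA (w.take (k + 1))) =
      insert (rootPair w k) (invPairs n (wordProdA (w.take k))) := by
  rw [wordProdA_take_succ hk]
  exact invPairs_mul_sA (h.wordProdA_take_mem k) (h.1 _ (List.getD_mem hk)) (h.rootPair_lt hk)

lemma invPairs_take (h : IsReducedA n w) {k : ℕ} (hk : k ≤ w.length) :
    invPairs n (wordProdA (w.take k)) = (Finset.range k).image (rootPair w) := by
  induction k with
  | zero => simp [wordProdA, invPairs_one]
  | succ k ih =>
    rw [h.invPairs_take_succ hk, ih (by omega), Finset.range_add_one, Finset.image_insert]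

lemma injOn_rootPair (h : IsReducedA n w) : Set.InjOn (rootPair w) (Finset.range w.length) := by
  rw [← Finset.card_image_iff, ← h.invPairs_take le_rfl, h.card_invPairs_take le_rfl,
    Finset.card_range]

lemma rootPair_mem_invPairs_take_iff (h : IsReducedA n w) {j k : ℕ} (hj : j < w.length)
    (hk : k ≤ w.length) : rootPair w j ∈ invPairs n (wordProdA (w.take k)) ↔ j < k := by
  rw [h.invPairs_take hk, Finset.mem_image]
  constructor
  · rintro ⟨j', hj', he⟩
    rw [Finset.mem_range] at hj'
    rwa [← h.injOn_rootPair (by simp; omega) (by simpa using hj) he]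
  · exact fun hjk => ⟨j, Finset.mem_range.2 hjk, rfl⟩

/-- The inversion sets of the prefixes are closed and coclosed. -/
lemma lt_lt_or_lt_lt_of_rootPair (h : IsReducedA n w) {a b c x m y : ℕ} (ha : a < w.length)
    (hb : b < w.length) (hc : c < w.length) (hxm : rootPair w a = (x, m))
    (hmy : rootPair w c = (m, y)) (hxy : rootPair w b = (x, y)) :
    a < b ∧ b < c ∨ c < b ∧ b < a := by
  have hmem := fun j k hj hk => h.rootPair_mem_invPairs_take_iff (j := j) (k := k) hj hk
  have hxm' := h.rootPair_lt ha
  have hmy' := h.rootPair_lt hc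
  rw [hxm] at hxm'
  rw [hmy] at hmy'
  have hab : a ≠ b := fun hab => by
    rw [hab, hxy, Prod.mk.injEq] at hxm
    omega
  have hcb : c ≠ b := fun hcb => by
    rw [hcb, hxy, Prod.mk.injEq] at hmy
    omega
  have hafter : a ≤ b ∨ c ≤ b := by
    have := hmem b (b + 1) hb hb
    rw [hxy] at this
    rcases mem_invPairs_or_of_lt_of_lt (this.2 (by omega)) hxm' hmy' with h' | h'
    · rw [← hxm, hmem a (b + 1) ha hb] at h'
      omega
    · rw [← hmy, hmem c (b + 1) hc hb] at h'
      omega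
  have hbefore : b ≤ a ∨ b ≤ c := by
    by_contra! hlt
    have hx := (hmem a b ha hb.le).2 hlt.1
    have hy := (hmem c b hc hb.le).2 hlt.2
    rw [hxm] at hx
    rw [hmy] at hy
    have := invPairs_trans hx hy
    rw [← hxy, hmem b b hb hb.le] at this
    omega
  omega

lemma rootSeqA_nodup (h : IsReducedA n w) : (rootSeqA w).Nodup := by
  rw [rootSeqA_eq_map]
  refine List.Nodup.map_on (fun j hj k hk he => ?_) List.nodup_range
  rw [List.mem_range] at hj hk
  exact h.injOn_rootPair (by simpa using hj) (by simpa using hk)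
    (pairRoot_injOn (h.rootPair_lt hj).ne (h.rootPair_lt hk).ne he)

lemma rootSeqA_convex (h : IsReducedA n w) (a b c : Fin (rootSeqA w).length)
    (habc : (rootSeqA w).get b = (rootSeqA w).get a + (rootSeqA w).get c) :
    (a < b ∧ b < c) ∨ (c < b ∧ b < a) := by
  have hlen := rootSeqA_length w
  have ha : (a : ℕ) < w.length := hlen ▸ a.isLt
  have hb : (b : ℕ) < w.length := hlen ▸ b.isLt
  have hc : (c : ℕ) < w.length := hlen ▸ c.isLt
  simp only [rootSeqA_eq_map, List.get_eq_getElem, List.getElem_map, List.getElem_range] at habc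
  rcases hpa : rootPair w a with ⟨a₁, a₂⟩
  rcases hpb : rootPair w b with ⟨b₁, b₂⟩
  rcases hpc : rootPair w c with ⟨c₁, c₂⟩
  have ha' := h.rootPair_lt ha
  have hb' := h.rootPair_lt hb
  have hc' := h.rootPair_lt hc
  rw [hpa] at ha' habc
  rw [hpb] at hb' habc
  rw [hpc] at hc' habc
  simp only [Fin.lt_def]
  rcases pairRoot_eq_add ha' hc' hb' habc with ⟨rfl, rfl, rfl⟩ | ⟨rfl, rfl, rfl⟩
  · exact h.lt_lt_or_lt_lt_of_rootPair ha hb hc hpa hpc hpb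
  · exact (h.lt_lt_or_lt_lt_of_rootPair hc hb ha hpc hpa hpb).symm

end IsReducedA

lemma isReducedA_of_isReducedWordA {n : ℕ} {w : List ℕ} (h : isReducedWordA n w) :
    IsReducedA n w :=
  ⟨h.1, by rw [h.2.2, card_invPairs_w0A, h.2.1]⟩


theorem isConvexEnumA_rootSeqA {n : ℕ} {w : List ℕ} (hw : isReducedWordA n w) :
    isConvexEnumA n (rootSeqA w) := by
  have h := isReducedA_of_isReducedWordA hw
  refine ⟨h.rootSeqA_nodup, fun β => ?_, h.rootSeqA_convex⟩
  have hw0 : invPairs n (w0A n) = (Finset.range w.length).image (rootPair w) := by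
    simpa [hw.2.2] using h.invPairs_take le_rfl
  rw [rootSeqA_eq_map, List.mem_map, posRootA_iff]
  constructor
  · rintro ⟨k, hk, rfl⟩
    obtain ⟨hp, hpq, hq⟩ := mem_invPairs_w0A.1 (hw0 ▸ Finset.mem_image_of_mem _ (by simpa using hk))
    exact ⟨_, _, hp, hpq, hq, rfl⟩
  · rintro ⟨p, q, hp, hpq, hq, rfl⟩
    obtain ⟨k, hk, he⟩ := Finset.mem_image.1 (hw0 ▸ mem_invPairs_w0A.2 ⟨hp, hpq, hq⟩)
    exact ⟨k, by simpa using hk, by rw [he]⟩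

lemma permAct_alphaA_injective (σ : Equiv.Perm ℕ) :
    Function.Injective fun i => permAct σ (alphaA i) := by
  intro i j h
  simp only [alphaA_eq_pairRoot, permAct_pairRoot] at h
  have := pairRoot_injOn (σ.injective.ne (Nat.succ_ne_self i).symm)
    (σ.injective.ne (Nat.succ_ne_self j).symm) h
  exact σ.injective (Prod.mk.inj this).1

theorem rootSeqA_injective : Function.Injective rootSeqA := by
  intro w w' h
  have hlen : w.length = w'.length := by rw [← rootSeqA_length, h, rootSeqA_length]
  have htake : ∀ k, w.take k = w'.take k := by
    intro k
    induction k with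
    | zero => rfl
    | succ k ih =>
      rw [List.take_add_one, List.take_add_one, ih]
      congr 1
      by_cases hk : k < w.length
      · have hk' : k < w'.length := hlen ▸ hk
        have := List.getElem_of_eq h (i := k) (by rwa [rootSeqA_length])
        simp only [rootSeqA, List.getElem_map, List.getElem_range, ih,
          List.getD_eq_getElem _ _ hk, List.getD_eq_getElem _ _ hk'] at this
        rw [List.getElem?_eq_getElem hk, List.getElem?_eq_getElem hk',
          permAct_alphaA_injective _ this]
      · rw [List.getElem?_eq_none (by omega), List.getElem?_eq_none (by omega)]
  have := htake w.length
  rwa [List.take_length, hlen, List.take_length] at this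

namespace isConvexEnumA

variable {n : ℕ} {L : List (ℕ → ℤ)}

lemma idxOf_lt_length (hL : isConvexEnumA n L) {p q : ℕ} (hp : 1 ≤ p) (hpq : p < q)
    (hq : q ≤ n + 1) : L.idxOf (pairRoot (p, q)) < L.length :=
  List.idxOf_lt_length_of_mem ((hL.2.1 _).2 (posRootA_iff.2 ⟨p, q, hp, hpq, hq, rfl⟩))

lemma idxOf_lt_lt_or_lt_lt (hL : isConvexEnumA n L) {x m y : ℕ} (hx : 1 ≤ x) (hxm : x < m)
    (hmy : m < y) (hy : y ≤ n + 1) :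
    L.idxOf (pairRoot (x, m)) < L.idxOf (pairRoot (x, y)) ∧
        L.idxOf (pairRoot (x, y)) < L.idxOf (pairRoot (m, y)) ∨
      L.idxOf (pairRoot (m, y)) < L.idxOf (pairRoot (x, y)) ∧
        L.idxOf (pairRoot (x, y)) < L.idxOf (pairRoot (x, m)) := by
  have hsum : pairRoot (x, y) = pairRoot (x, m) + pairRoot (m, y) := by
    simp only [pairRoot]
    abel
  exact hL.2.2 ⟨_, hL.idxOf_lt_length hx hxm (by omega)⟩ ⟨_, hL.idxOf_lt_length hx (by omega) hy⟩
    ⟨_, hL.idxOf_lt_length (by omega) hmy hy⟩ (by simpa only [List.idxOf_get] using hsum)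

lemma length_eq (hL : isConvexEnumA n L) : L.length = n * (n + 1) / 2 := by
  have hinj : Set.InjOn pairRoot (invPairs n (w0A n)) := fun x hx y hy =>
    pairRoot_injOn (mem_invPairs_w0A.1 hx).2.1.ne (mem_invPairs_w0A.1 hy).2.1.ne
  rw [← List.toFinset_card_of_nodup hL.1, ← card_invPairs_w0A, ← Finset.card_image_of_injOn hinj]
  congr 1
  ext β
  rw [List.mem_toFinset, hL.2.1, posRootA_iff, Finset.mem_image]
  constructor
  · rintro ⟨p, q, hp, hpq, hq, rfl⟩
    exact ⟨(p, q), mem_invPairs_w0A.2 ⟨hp, hpq, hq⟩, rfl⟩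
  · rintro ⟨⟨p, q⟩, h, rfl⟩
    obtain ⟨hp, hpq, hq⟩ := mem_invPairs_w0A.1 h
    exact ⟨p, q, hp, hpq, hq, rfl⟩

end isConvexEnumA

/-- Read `f x y` as the position of `e_x - e_y` in a convex order whose first `k` roots form the
inversion set of `σ`; the conclusion says that the root at position `k` is `σ (α_i)`. A coordinate
strictly between `σ⁻¹ p` and `σ⁻¹ q` would break convexity. -/
lemma inv_apply_eq_add_one_of_convex {n k : ℕ} {σ : Equiv.Perm ℕ} (hσ : σ ∈ symGroupA n)
    {f : ℕ → ℕ → ℕ}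
    (hf : ∀ x m y, 1 ≤ x → x < m → m < y → y ≤ n + 1 →
      f x m < f x y ∧ f x y < f m y ∨ f m y < f x y ∧ f x y < f x m)
    (hinv : ∀ x y, 1 ≤ x → x < y → y ≤ n + 1 → ((x, y) ∈ invPairs n σ ↔ f x y < k))
    {p q : ℕ} (hp : 1 ≤ p) (hpq : p < q) (hq : q ≤ n + 1) (hk : f p q = k) :
    σ⁻¹ q = σ⁻¹ p + 1 := by
  have hlt : σ⁻¹ p < σ⁻¹ q := by
    have := hinv p q hp hpq hq
    have := (σ⁻¹).injective.ne hpq.ne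
    rw [mem_invPairs] at *
    omega
  have hp' := (inv_mem_Icc_iff hσ p).2 ⟨hp, by omega⟩
  have hq' := (inv_mem_Icc_iff hσ q).2 ⟨by omega, hq⟩
  by_contra hne
  set r := σ (σ⁻¹ p + 1) with hr
  have hr' : σ⁻¹ r = σ⁻¹ p + 1 := by simp [hr]
  have hrange : 1 ≤ r ∧ r ≤ n + 1 := (apply_mem_Icc_iff hσ _).2 (by omega)
  have hrp : r ≠ p := fun h => by rw [h] at hr'; omega
  have hrq : r ≠ q := fun h => by rw [h] at hr'; omega
  rcases lt_or_gt_of_ne hrp with hrp | hrp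
  · have := hf r p q hrange.1 hrp hpq hq
    have h₁ := hinv r p hrange.1 hrp (by omega)
    have h₂ := hinv r q hrange.1 (by omega) hq
    simp only [mem_invPairs] at h₁ h₂
    omega
  rcases lt_or_gt_of_ne hrq with hrq | hrq
  · have := hf p r q hp hrp hrq hq
    have h₁ := hinv p r hp hrp (by omega)
    have h₂ := hinv r q (by omega) hrq hq
    simp only [mem_invPairs] at h₁ h₂
    omega
  · have := hf p q r hp hpq hrq hrange.2
    have h₁ := hinv q r (by omega) hrq hrange.2
    have h₂ := hinv p r hp (by omega) hrange.2
    simp only [mem_invPairs] at h₁ h₂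
    omega

lemma exists_rootSeqA_eq_take {n : ℕ} {L : List (ℕ → ℤ)} (hL : isConvexEnumA n L) {k : ℕ}
    (hk : k ≤ L.length) :
    ∃ u : List ℕ, (∀ i ∈ u, 1 ≤ i ∧ i ≤ n) ∧ rootSeqA u = L.take k ∧
      ∀ x y, 1 ≤ x → x < y → y ≤ n + 1 →
        ((x, y) ∈ invPairs n (wordProdA u) ↔ L.idxOf (pairRoot (x, y)) < k) := by
  induction k with
  | zero => exact ⟨[], by simp, by simp [rootSeqA], by simp [wordProdA, invPairs_one]⟩
  | succ k ih =>
    obtain ⟨u, hu, hroots, hinv⟩ := ih (by omega)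
    have hkL : k < L.length := by omega
    obtain ⟨p, q, hp, hpq, hq, hLk⟩ := posRootA_iff.1 ((hL.2.1 _).1 (List.getElem_mem hkL))
    have hidx : L.idxOf (pairRoot (p, q)) = k := by rw [← hLk]; exact hL.1.idxOf_getElem k hkL
    have hσ := wordProdA_mem_symGroupA hu
    have hsucc := inv_apply_eq_add_one_of_convex hσ (fun _ _ _ => hL.idxOf_lt_lt_or_lt_lt)
      hinv hp hpq hq hidx
    set σ := wordProdA u
    set i := σ⁻¹ p
    have hi : 1 ≤ i ∧ i ≤ n := by
      have := (inv_mem_Icc_iff hσ p).2 ⟨hp, by omega⟩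
      have := (inv_mem_Icc_iff hσ q).2 ⟨by omega, hq⟩
      omega
    have hσi : σ i = p := by simp [i]
    have hσi' : σ (i + 1) = q := by rw [← hsucc]; simp
    refine ⟨u ++ [i], ?_, ?_, fun x y hx hxy hy => ?_⟩
    · intro j hj
      rcases List.mem_append.1 hj with hj | hj
      exacts [hu j hj, List.mem_singleton.1 hj ▸ hi]
    · rw [rootSeqA_concat, hroots, alphaA_eq_pairRoot, permAct_pairRoot, hσi, hσi', ← hLk,
        List.take_add_one, List.getElem?_eq_getElem hkL]
      rfl
    · have hwp : wordProdA (u ++ [i]) = σ * sA i := by simp [wordProdA, σ]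
      have hnew : L.idxOf (pairRoot (x, y)) = k ↔ (x, y) = (p, q) := by
        rw [← hidx, List.idxOf_inj ((hL.2.1 _).2 (posRootA_iff.2 ⟨x, y, hx, hxy, hy, rfl⟩))]
        exact pairRoot_injOn.eq_iff hxy.ne hpq.ne
      rw [hwp, invPairs_mul_sA hσ hi (by rwa [hσi, hσi']), hσi, hσi', Finset.mem_insert,
        hinv x y hx hxy hy, ← hnew]
      omega

theorem exists_rootSeqA_eq {n : ℕ} {L : List (ℕ → ℤ)} (hL : isConvexEnumA n L) :
    ∃ w, isReducedWordA n w ∧ rootSeqA w = L := by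
  obtain ⟨u, hu, hroots, hinv⟩ := exists_rootSeqA_eq_take hL le_rfl
  rw [List.take_length] at hroots
  refine ⟨u, ⟨hu, by rw [← rootSeqA_length, hroots, hL.length_eq], ?_⟩, hroots⟩
  refine eq_of_invPairs_eq (wordProdA_mem_symGroupA hu) (w0A_mem_symGroupA n) (Finset.ext ?_)
  rintro ⟨x, y⟩
  rw [mem_invPairs_w0A]
  constructor
  · intro h
    have := mem_invPairs.1 h
    omega
  · rintro ⟨hx, hxy, hy⟩
    exact (hinv x y hx hxy hy).2 (hL.idxOf_lt_length hx hxy hy)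

theorem statement2_general (n : ℕ) :
    Set.BijOn rootSeqA {w | isReducedWordA n w} {L | isConvexEnumA n L} :=
  ⟨fun _ hw => isConvexEnumA_rootSeqA hw, rootSeqA_injective.injOn,
    fun _ hL => exists_rootSeqA_eq hL⟩

/-- Papi's theorem in type `A_n`. The map sending a reduced word for `w₀`
to its induced order on positive roots is a bijection from the set of reduced words for `w₀`
onto the set of convex total orders on the positive roots. -/
theorem statement2 (n : ℕ) (hn : 1 ≤ n) :
    Set.BijOn rootSeqA {w | isReducedWordA n w} {L | isConvexEnumA n L} :=
  statement2_general n

end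
end

section
/- Let 𝐢^D = (i_1,…,i_N), N = n(n−1), be the concatenation of the blocks (i, i+1, …, n−1, n, n−2, n−3, …, i) for i = 1, …, n−2 followed by (n−1, n). Then the vectors β_k = s_{i_1}⋯s_{i_{k−1}}(α_{i_k}), 1 ≤ k ≤ N, are pairwise distinct positive roots of type D_n (hence list all of them), and the product s_{i_1}⋯s_{i_N} maps every positive root of type D_n to the negative of a positive root. In particular, 𝐢^D is a reduced word for the longest element of the Weyl group W(D_n). -/
/-!
The block `(i, i+1, …, n-1, n, n-2, …, i)` acts on `ℤ^n` by negating the coordinates `i`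
and `n`, and its own root sequence is
`e_i - e_(i+1), …, e_i - e_n, e_i + e_n, e_i + e_(n-1), …, e_i + e_(i+1)`: the positive roots
with leading coordinate `i`. The closing pair `(n-1, n)` is the block for `i = n-1`. The blocks
before block `i` negate the coordinates `1, …, i-1` and multiply the last one by `(-1)^(i-1)`,
so on the roots with leading coordinate `i` they act either trivially or by the sign change of
`e_n`, which only swaps `e_i - e_n` and `e_i + e_n`. Hence the root sequence is a permutation of
the positive roots, and the whole word is `-1` on the first `n-1` coordinates and `(-1)^(n-1)`
on the last, which sends every positive root to minus a positive root.
-/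

open scoped Classical

noncomputable section

/-- Type `D_n` simple roots: `α_i = e_i - e_(i+1)` for `1 ≤ i ≤ n-1`, `α_n = e_(n-1) + e_n`. -/
def alphaD (n i : ℕ) : ℕ → ℤ := if i = n then stdE (n-1) + stdE n else stdE i - stdE (i+1)

/-- Positive root `β_(i,k) = α_i + ⋯ + α_k = e_i - e_(k+1)` (for `1 ≤ i ≤ k ≤ n-1`). -/
def betaD (i k : ℕ) : ℕ → ℤ := stdE i - stdE (k+1)

/-- Positive root `γ_(i,k) = α_i + ⋯ + α_(n-2) + α_n + α_(n-1) + ⋯ + α_k = e_i + e_k`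
(for `1 ≤ i < k ≤ n`). -/
def gammaD (i k : ℕ) : ℕ → ℤ := stdE i + stdE k

/-- `β` is a positive root of type `D_n`. -/
def PosRootD (n : ℕ) (β : ℕ → ℤ) : Prop :=
  (∃ i k, 1 ≤ i ∧ i ≤ k ∧ k ≤ n-1 ∧ β = betaD i k) ∨
  (∃ i k, 1 ≤ i ∧ i < k ∧ k ≤ n ∧ β = gammaD i k)

/-- The simple reflection `s_i` of `W(D_n)` acting on `ℤ^n`: for `i ≤ n-1` it swaps
coordinates `i` and `i+1`; `s_n` swaps coordinates `n-1` and `n` and negates both. -/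
def sDap (n i : ℕ) (v : ℕ → ℤ) : ℕ → ℤ :=
  if i = n then fun j => if j = n-1 then -(v n) else if j = n then -(v (n-1)) else v j
  else fun j => if j = i then v (i+1) else if j = i+1 then v i else v j

/-- The action of the product `s_(i₁) ⋯ s_(i_N)` on a vector. -/
def actD (n : ℕ) (w : List ℕ) (v : ℕ → ℤ) : ℕ → ℤ := w.foldr (sDap n) v

/-- The induced root sequence `β_k = s_(i₁)⋯s_(i_(k-1)) (α_(i_k))` of a word (0-indexed). -/
def rootSeqD (n : ℕ) (w : List ℕ) : List (ℕ → ℤ) :=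
  (List.range w.length).map fun k => actD n (w.take k) (alphaD n (w.getD k 0))

/-- The block `(i, i+1, …, n-1, n, n-2, n-3, …, i)` of the word `𝐢^D`. -/
def blockD (n i : ℕ) : List ℕ :=
  ((List.range (n-i)).map (· + i)) ++ [n] ++ (((List.range (n-1-i)).map (· + i)).reverse)

/-- The word `𝐢^D`: the blocks `(i, i+1, …, n-1, n, n-2, …, i)` for `i = 1, …, n-2`,
followed by `(n-1, n)`. -/
def wordD (n : ℕ) : List ℕ :=
  ((List.range (n-2)).flatMap fun i' => blockD n (i'+1)) ++ [n-1, n]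

/-- Standard inner product on `ℤ^n` (coordinates `1,…,n`; index `0` unused). -/
def ipD (n : ℕ) (v u : ℕ → ℤ) : ℤ := ∑ j ∈ Finset.range (n+1), v j * u j

lemma betaD_apply (i k j : ℕ) :
    betaD i k j = (if j = i then 1 else 0) - (if j = k + 1 then 1 else 0) := by
  simp [betaD, stdE]

lemma gammaD_apply (i k j : ℕ) :
    gammaD i k j = (if j = i then 1 else 0) + (if j = k then 1 else 0) := by
  simp [gammaD, stdE]

lemma alphaD_self_apply (n j : ℕ) :
    alphaD n n j = (if j = n - 1 then 1 else 0) + (if j = n then 1 else 0) := by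
  simp [alphaD, stdE]

lemma alphaD_of_ne {n i : ℕ} (h : i ≠ n) : alphaD n i = betaD i i := by
  simp [alphaD, h, betaD]

lemma sDap_self_apply (n : ℕ) (v : ℕ → ℤ) (j : ℕ) :
    sDap n n v j = if j = n - 1 then -v n else if j = n then -v (n - 1) else v j := by
  simp [sDap]

lemma sDap_of_ne_apply {n i : ℕ} (h : i ≠ n) (v : ℕ → ℤ) (j : ℕ) :
    sDap n i v j = if j = i then v (i + 1) else if j = i + 1 then v i else v j := by
  simp [sDap, h]

@[simp] lemma actD_nil (n : ℕ) (v : ℕ → ℤ) : actD n [] v = v := rfl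

@[simp] lemma actD_cons (n a : ℕ) (w : List ℕ) (v : ℕ → ℤ) :
    actD n (a :: w) v = sDap n a (actD n w v) := rfl

lemma actD_append (n : ℕ) (u w : List ℕ) (v : ℕ → ℤ) :
    actD n (u ++ w) v = actD n u (actD n w v) := List.foldr_append

lemma rootSeqD_append (n : ℕ) (u w : List ℕ) :
    rootSeqD n (u ++ w) = rootSeqD n u ++ (rootSeqD n w).map (actD n u) := by
  unfold rootSeqD
  rw [List.length_append, List.range_add, List.map_append, List.map_map, List.map_map]
  congr 1
  · refine List.map_congr_left fun k hk => ?_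
    rw [List.mem_range] at hk
    rw [List.take_append_of_le_length hk.le, List.getD_eq_getElem?_getD,
      List.getD_eq_getElem?_getD, List.getElem?_append_left hk]
  · refine List.map_congr_left fun k _ => ?_
    rw [Function.comp_apply, Function.comp_apply, List.take_append, List.getD_eq_getElem?_getD,
      List.getD_eq_getElem?_getD, List.getElem?_append_right (by omega), actD_append,
      Nat.add_sub_cancel_left, List.take_of_length_le (by omega)]

lemma rootSeqD_cons (n a : ℕ) (w : List ℕ) :
    rootSeqD n (a :: w) = alphaD n a :: (rootSeqD n w).map (sDap n a) :=
  rootSeqD_append n [a] w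

lemma actD_range'_apply {n : ℕ} (v : ℕ → ℤ) (j : ℕ) :
    ∀ {a d : ℕ}, a + d ≤ n → actD n (List.range' a d) v j =
      if j = a then v (a + d) else if a < j ∧ j ≤ a + d then v (j - 1) else v j
  | a, 0, _ => by split_ifs <;> first | omega | simp_all
  | a, d + 1, h => by
    rw [List.range'_succ, actD_cons, sDap_of_ne_apply (by omega)]
    simp only [actD_range'_apply v _ (show a + 1 + d ≤ n by omega)]
    split_ifs <;> first | omega | (congr 1; omega)

lemma actD_reverse_range'_apply {n : ℕ} (v : ℕ → ℤ) (j : ℕ) :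
    ∀ {a d : ℕ}, a + d ≤ n → actD n (List.range' a d).reverse v j =
      if j = a + d then v a else if a ≤ j ∧ j < a + d then v (j + 1) else v j
  | a, 0, _ => by split_ifs <;> first | omega | simp_all
  | a, d + 1, h => by
    rw [List.range'_concat, List.reverse_append, List.reverse_singleton, List.singleton_append,
      actD_cons, sDap_of_ne_apply (by omega)]
    simp only [actD_reverse_range'_apply v _ (show a + d ≤ n by omega)]
    split_ifs <;> first | omega | (congr 1; omega)

lemma rootSeqD_range' {n : ℕ} :
    ∀ {a d : ℕ}, a + d ≤ n →
      rootSeqD n (List.range' a d) = (List.range d).map fun t => betaD a (a + t)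
  | a, 0, _ => rfl
  | a, d + 1, h => by
    rw [List.range'_succ, rootSeqD_cons, rootSeqD_range' (show a + 1 + d ≤ n by omega),
      List.range_succ_eq_map, List.map_cons, List.map_map, List.map_map, alphaD_of_ne (by omega)]
    refine congrArg _ (List.map_congr_left fun t _ => funext fun j => ?_)
    simp only [Function.comp_apply, sDap_of_ne_apply (show a ≠ n by omega), betaD_apply]
    split_ifs <;> omega

lemma rootSeqD_reverse_range' {n : ℕ} :
    ∀ {a d : ℕ}, a + d ≤ n →
      rootSeqD n (List.range' a d).reverse =
        (List.range d).map fun s => betaD (a + d - 1 - s) (a + d - 1)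
  | a, 0, _ => rfl
  | a, d + 1, h => by
    rw [List.range'_concat, List.reverse_append, List.reverse_singleton, List.singleton_append,
      rootSeqD_cons, rootSeqD_reverse_range' (show a + d ≤ n by omega), List.range_succ_eq_map,
      List.map_cons, List.map_map, List.map_map, alphaD_of_ne (by omega)]
    congr 1
    · simp
    · refine List.map_congr_left fun s hs => funext fun j => ?_
      rw [List.mem_range] at hs
      simp only [Function.comp_apply, sDap_of_ne_apply (show a + 1 * d ≠ n by omega),
        betaD_apply]
      split_ifs <;> omega

lemma blockD_eq (n i : ℕ) :
    blockD n i = List.range' i (n - i) ++ [n] ++ (List.range' i (n - 1 - i)).reverse := by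
  simp only [blockD, List.range'_eq_map_range, add_comm i]

lemma actD_blockD_apply {n i : ℕ} (hi : i < n) (v : ℕ → ℤ) (j : ℕ) :
    actD n (blockD n i) v j = if j = i ∨ j = n then -v j else v j := by
  rw [blockD_eq, actD_append, actD_append, actD_range'_apply _ _ (by omega)]
  simp only [actD_cons, actD_nil, sDap_self_apply, actD_reverse_range'_apply _ _ (show
    i + (n - 1 - i) ≤ n by omega)]
  split_ifs <;> first | omega | (congr 1; omega) | (congr 2; omega)

def leadingRoots (n i : ℕ) : List (ℕ → ℤ) :=
  (List.range (n - i)).map (fun t => betaD i (i + t)) ++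
    (List.range (n - i)).map (fun s => gammaD i (n - s))

lemma rootSeqD_blockD {n i : ℕ} (hi : i < n) : rootSeqD n (blockD n i) = leadingRoots n i := by
  rw [blockD_eq, List.append_assoc, List.singleton_append, rootSeqD_append, rootSeqD_cons,
    rootSeqD_range' (by omega), rootSeqD_reverse_range' (by omega), leadingRoots,
    show n - i = n - 1 - i + 1 by omega, List.range_succ_eq_map (n := n - 1 - i),
    List.map_cons, List.map_cons, List.map_map, List.map_map, List.map_map]
  congr 2
  · funext j
    simp only [actD_range'_apply _ _ (show i + (n - 1 - i + 1) ≤ n by omega), alphaD_self_apply,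
      gammaD_apply]
    split_ifs <;> omega
  · rw [List.map_map]
    refine List.map_congr_left fun s hs => funext fun j => ?_
    rw [List.mem_range] at hs
    simp only [Function.comp_apply, Nat.succ_eq_add_one,
      actD_range'_apply _ _ (show i + (n - 1 - i + 1) ≤ n by omega), sDap_self_apply, betaD_apply,
      gammaD_apply]
    split_ifs <;> omega

lemma mem_leadingRoots {n i : ℕ} (hi : i < n) {β : ℕ → ℤ} :
    β ∈ leadingRoots n i ↔ (∃ k, i ≤ k ∧ k ≤ n - 1 ∧ β = betaD i k) ∨
      (∃ k, i < k ∧ k ≤ n ∧ β = gammaD i k) := by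
  simp only [leadingRoots, List.mem_append, List.mem_map, List.mem_range]
  constructor
  · rintro (⟨t, ht, rfl⟩ | ⟨s, hs, rfl⟩)
    · exact Or.inl ⟨i + t, by omega, by omega, rfl⟩
    · exact Or.inr ⟨n - s, by omega, by omega, rfl⟩
  · rintro (⟨k, hik, hkn, rfl⟩ | ⟨k, hik, hkn, rfl⟩)
    · exact Or.inl ⟨k - i, by omega, by rw [Nat.add_sub_cancel' hik]⟩
    · exact Or.inr ⟨n - k, by omega, by rw [Nat.sub_sub_self hkn]⟩

lemma apply_eq_of_mem_leadingRoots {n i : ℕ} (hi : i < n) {β : ℕ → ℤ}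
    (hβ : β ∈ leadingRoots n i) : β i = 1 ∧ ∀ j < i, β j = 0 := by
  rcases (mem_leadingRoots hi).mp hβ with ⟨k, _, -, rfl⟩ | ⟨k, _, -, rfl⟩ <;>
    exact ⟨by simp only [betaD_apply, gammaD_apply]; split_ifs <;> omega,
      fun j hj => by simp only [betaD_apply, gammaD_apply]; split_ifs <;> omega⟩

lemma betaD_right_inj {i k k' : ℕ} (hik : i ≤ k) : betaD i k = betaD i k' ↔ k = k' := by
  refine ⟨fun h => ?_, congrArg _⟩
  have := congrFun h (k + 1)
  simp only [betaD_apply] at this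
  split_ifs at this <;> omega

lemma gammaD_right_inj {i k k' : ℕ} (hik : i ≠ k) : gammaD i k = gammaD i k' ↔ k = k' := by
  refine ⟨fun h => ?_, congrArg _⟩
  have := congrFun h k
  simp only [gammaD_apply, if_neg hik.symm] at this
  split_ifs at this <;> omega

lemma betaD_ne_gammaD {i k i' k' : ℕ} (hik : i ≤ k) : betaD i k ≠ gammaD i' k' := fun h => by
  have := congrFun h (k + 1)
  simp only [betaD_apply, gammaD_apply] at this
  split_ifs at this <;> omega

lemma nodup_leadingRoots (n i : ℕ) : (leadingRoots n i).Nodup := by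
  refine List.nodup_append.mpr ⟨?_, ?_, ?_⟩
  · exact List.nodup_range.map_on fun t _ t' _ h => by
      have := (betaD_right_inj (by omega)).mp h; omega
  · exact List.nodup_range.map_on fun s hs s' hs' h => by
      rw [List.mem_range] at hs hs'
      have := (gammaD_right_inj (by omega)).mp h; omega
  · simp only [List.mem_map]
    rintro _ ⟨t, -, rfl⟩ _ ⟨s, -, rfl⟩
    exact betaD_ne_gammaD (by omega)

def negLast (n : ℕ) (v : ℕ → ℤ) : ℕ → ℤ := Function.update v n (-v n)

lemma negLast_of_apply_eq_zero {n : ℕ} {v : ℕ → ℤ} (hv : v n = 0) : negLast n v = v := by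
  simp [negLast, hv]

lemma negLast_betaD {n i : ℕ} (hi : i < n) : negLast n (betaD i (n - 1)) = gammaD i n := by
  funext j
  simp only [negLast, Function.update_apply, betaD_apply, gammaD_apply]
  split_ifs <;> omega

lemma negLast_gammaD {n i : ℕ} (hi : i < n) : negLast n (gammaD i n) = betaD i (n - 1) := by
  funext j
  simp only [negLast, Function.update_apply, betaD_apply, gammaD_apply]
  split_ifs <;> omega

lemma leadingRoots_eq {n i : ℕ} (hi : i < n) :
    leadingRoots n i = (List.range (n - 1 - i)).map (fun t => betaD i (i + t)) ++
      betaD i (n - 1) :: gammaD i n ::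
        (List.range (n - 1 - i)).map (fun s => gammaD i (n - 1 - s)) := by
  have hasc : (List.range (n - 1 - i + 1)).map (fun t => betaD i (i + t)) =
      (List.range (n - 1 - i)).map (fun t => betaD i (i + t)) ++ [betaD i (n - 1)] := by
    rw [List.range_succ, List.map_append, List.map_singleton,
      show i + (n - 1 - i) = n - 1 by omega]
  have hdesc : (List.range (n - 1 - i + 1)).map (fun s => gammaD i (n - s)) =
      gammaD i n :: (List.range (n - 1 - i)).map (fun s => gammaD i (n - 1 - s)) := by
    rw [List.range_succ_eq_map, List.map_cons, List.map_map]
    refine congrArg _ (List.map_congr_left fun s _ => ?_)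
    simp only [Function.comp_apply]
    congr 1
    omega
  rw [leadingRoots, show n - i = n - 1 - i + 1 by omega, hasc, hdesc, List.append_assoc,
    List.singleton_append]

lemma map_negLast_leadingRoots_perm {n i : ℕ} (hi : i < n) :
    ((leadingRoots n i).map (negLast n)).Perm (leadingRoots n i) := by
  have hfix : ∀ {l : List ℕ} {f : ℕ → ℕ → ℤ}, (∀ s ∈ l, f s n = 0) →
      (l.map f).map (negLast n) = l.map f := fun h => by
      rw [List.map_map]
      exact List.map_congr_left fun s hs => negLast_of_apply_eq_zero (h s hs)
  rw [leadingRoots_eq hi, List.map_append, List.map_cons, List.map_cons, negLast_betaD hi,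
    negLast_gammaD hi, hfix, hfix]
  · exact (List.Perm.swap _ _ _).append_left _
  all_goals
    intro s hs
    rw [List.mem_range] at hs
    simp only [betaD_apply, gammaD_apply]
    split_ifs <;> omega

def prefixWord (n m : ℕ) : List ℕ := (List.range m).flatMap fun i' => blockD n (i' + 1)

lemma prefixWord_succ (n m : ℕ) : prefixWord n (m + 1) = prefixWord n m ++ blockD n (m + 1) := by
  simp [prefixWord, List.range_succ]

lemma actD_prefixWord_apply {n : ℕ} (v : ℕ → ℤ) (j : ℕ) :
    ∀ {m : ℕ}, m < n → actD n (prefixWord n m) v j =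
      if 1 ≤ j ∧ j ≤ m then -v j else if j = n then (-1) ^ m * v j else v j
  | 0, _ => by
    simp only [prefixWord, List.range_zero, List.flatMap_nil, actD_nil, pow_zero, one_mul]
    split_ifs <;> omega
  | m + 1, hm => by
    rw [prefixWord_succ, actD_append, actD_prefixWord_apply _ _ (by omega)]
    simp only [actD_blockD_apply (show m + 1 < n by omega), pow_succ]
    split_ifs <;> first | omega | ring

lemma actD_prefixWord {n m : ℕ} (hm : m < n) {v : ℕ → ℤ}
    (hv : ∀ j, 1 ≤ j → j ≤ m → v j = 0) :
    actD n (prefixWord n m) v = if Even m then v else negLast n v := by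
  funext j
  rw [actD_prefixWord_apply _ _ hm]
  rcases Nat.even_or_odd m with hm' | hm'
  · rw [if_pos hm', hm'.neg_one_pow, one_mul]
    split_ifs with hj <;> first | rfl | simp [hv j hj.1 hj.2]
  · rw [if_neg (Nat.not_even_iff_odd.mpr hm'), hm'.neg_one_pow, negLast, Function.update_apply]
    split_ifs with hj hjn hjn <;> first | omega | simp [hv j hj.1 hj.2] | simp [hjn]

def posRootList (n : ℕ) : List (ℕ → ℤ) :=
  (List.range (n - 1)).flatMap fun i' => leadingRoots n (i' + 1)

lemma mem_posRootList {n : ℕ} {β : ℕ → ℤ} : β ∈ posRootList n ↔ PosRootD n β := by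
  simp only [posRootList, List.mem_flatMap, List.mem_range, PosRootD]
  constructor
  · rintro ⟨i', hi', hβ⟩
    rcases (mem_leadingRoots (by omega)).mp hβ with ⟨k, h⟩ | ⟨k, h⟩
    · exact Or.inl ⟨i' + 1, k, by omega, h⟩
    · exact Or.inr ⟨i' + 1, k, by omega, h⟩
  · rintro (⟨i, k, hi, hik, hkn, rfl⟩ | ⟨i, k, hi, hik, hkn, rfl⟩) <;>
      refine ⟨i - 1, by omega, (mem_leadingRoots (by omega)).mpr ?_⟩ <;>
      rw [Nat.sub_add_cancel hi]
    · exact Or.inl ⟨k, hik, hkn, rfl⟩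
    · exact Or.inr ⟨k, hik, hkn, rfl⟩

lemma nodup_posRootList (n : ℕ) : (posRootList n).Nodup := by
  refine List.nodup_flatMap.mpr ⟨fun _ _ => nodup_leadingRoots _ _, ?_⟩
  refine List.pairwise_lt_range.imp_of_mem fun {a b} _ hb hab β hβa hβb => ?_
  rw [List.mem_range] at hb
  have h1 := (apply_eq_of_mem_leadingRoots (by omega) hβa).1
  have h2 := (apply_eq_of_mem_leadingRoots (by omega) hβb).2 (a + 1) (by omega)
  omega

lemma rootSeqD_prefixWord_perm {n : ℕ} :
    ∀ {m : ℕ}, m < n → (rootSeqD n (prefixWord n m)).Perm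
      ((List.range m).flatMap fun i' => leadingRoots n (i' + 1))
  | 0, _ => .refl _
  | m + 1, hm => by
    rw [prefixWord_succ, rootSeqD_append, rootSeqD_blockD hm, List.range_succ,
      List.flatMap_append, List.flatMap_singleton]
    refine (rootSeqD_prefixWord_perm (by omega)).append ?_
    have hvanish : ∀ β ∈ leadingRoots n (m + 1), ∀ j, 1 ≤ j → j ≤ m → β j = 0 :=
      fun β hβ j _ hj => (apply_eq_of_mem_leadingRoots hm hβ).2 j (by omega)
    rw [List.map_congr_left fun β hβ => actD_prefixWord (by omega) (hvanish β hβ)]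
    split_ifs
    · rw [List.map_id']
    · exact map_negLast_leadingRoots_perm hm

lemma wordD_eq_prefixWord {n : ℕ} (hn : 2 ≤ n) : wordD n = prefixWord n (n - 1) := by
  have hlast : blockD n (n - 1) = [n - 1, n] := by
    simp [blockD, show n - (n - 1) = 1 by omega]
  rw [show n - 1 = n - 2 + 1 by omega, prefixWord_succ, show n - 2 + 1 = n - 1 by omega, hlast]
  rfl

lemma rootSeqD_wordD_perm {n : ℕ} (hn : 2 ≤ n) :
    (rootSeqD n (wordD n)).Perm (posRootList n) := by
  rw [wordD_eq_prefixWord hn]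
  exact rootSeqD_prefixWord_perm (by omega)

lemma length_blockD {n i : ℕ} (hi : i < n) : (blockD n i).length = 2 * (n - i) := by
  simp only [blockD, List.length_append, List.length_reverse, List.length_map, List.length_range,
    List.length_singleton]
  omega

lemma length_prefixWord {n : ℕ} :
    ∀ {m : ℕ}, m < n → (prefixWord n m).length + m * (m + 1) = 2 * n * m
  | 0, _ => rfl
  | m + 1, hm => by
    have := length_prefixWord (show m < n by omega)
    rw [prefixWord_succ, List.length_append, length_blockD hm]
    zify [show m + 1 ≤ n by omega] at this ⊢
    linear_combination this

lemma length_wordD {n : ℕ} (hn : 2 ≤ n) : (wordD n).length = n * (n - 1) := by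
  have := length_prefixWord (show n - 1 < n by omega)
  rw [wordD_eq_prefixWord hn]
  zify [show 1 ≤ n by omega] at this ⊢
  linear_combination this

lemma PosRootD.apply_eq_zero {n : ℕ} {β : ℕ → ℤ} (hβ : PosRootD n β) {j : ℕ}
    (hj : j = 0 ∨ n < j) : β j = 0 := by
  rcases hβ with ⟨i, k, hi, hik, hkn, rfl⟩ | ⟨i, k, hi, hik, hkn, rfl⟩
  · simp only [betaD_apply]; split_ifs <;> omega
  · simp only [gammaD_apply]; split_ifs <;> omega

lemma PosRootD.negLast {n : ℕ} {β : ℕ → ℤ} (hβ : PosRootD n β) :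
    PosRootD n (negLast n β) := by
  rcases hβ with ⟨i, k, hi, hik, hkn, rfl⟩ | ⟨i, k, hi, hik, hkn, rfl⟩
  · by_cases hk : k = n - 1
    · subst hk
      rw [negLast_betaD (by omega)]
      exact Or.inr ⟨i, n, hi, by omega, le_rfl, rfl⟩
    · rw [negLast_of_apply_eq_zero (by simp only [betaD_apply]; split_ifs <;> omega)]
      exact Or.inl ⟨i, k, hi, hik, hkn, rfl⟩
  · by_cases hk : k = n
    · subst hk
      rw [negLast_gammaD hik]
      exact Or.inl ⟨i, k - 1, hi, by omega, le_rfl, rfl⟩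
    · rw [negLast_of_apply_eq_zero (by simp only [gammaD_apply]; split_ifs <;> omega)]
      exact Or.inr ⟨i, k, hi, hik, hkn, rfl⟩

lemma actD_wordD {n : ℕ} (hn : 2 ≤ n) {v : ℕ → ℤ}
    (hv : ∀ j, (j = 0 ∨ n < j) → v j = 0) :
    actD n (wordD n) v = -(if Even n then v else negLast n v) := by
  funext j
  rw [wordD_eq_prefixWord hn, actD_prefixWord_apply _ _ (by omega), Pi.neg_apply]
  rcases Nat.even_or_odd n with he | ho
  · have : Odd (n - 1) := Nat.Even.sub_odd (by omega) he odd_one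
    rw [if_pos he, this.neg_one_pow]
    split_ifs <;> first | rfl | (subst_vars; ring1) | simp [hv j (by omega)]
  · have : Even (n - 1) := Nat.Odd.sub_odd ho odd_one
    rw [if_neg (Nat.not_even_iff_odd.mpr ho), this.neg_one_pow, negLast, Function.update_apply]
    split_ifs <;> first | omega | rfl | (subst_vars; ring1) | simp [hv j (by omega)]

/-- The word `𝐢^D` has length `N = n(n-1)`; its induced root sequence
consists of pairwise distinct positive roots of type `D_n` (hence lists all of them); and
the product `s_(i₁)⋯s_(i_N)` maps every positive root to the negative of a positive root.
In particular `𝐢^D` is a reduced word for the longest element of `W(D_n)`. -/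
theorem statement13 (n : ℕ) (hn : 4 ≤ n) :
    (wordD n).length = n * (n-1) ∧
    (rootSeqD n (wordD n)).Nodup ∧
    (∀ β, β ∈ rootSeqD n (wordD n) ↔ PosRootD n β) ∧
    (∀ β, PosRootD n β → ∃ γ, PosRootD n γ ∧ actD n (wordD n) β = -γ) := by
  have hn2 : 2 ≤ n := by omega
  have hperm := rootSeqD_wordD_perm hn2
  refine ⟨length_wordD hn2, hperm.nodup_iff.mpr (nodup_posRootList n),
    fun β => hperm.mem_iff.trans mem_posRootList, fun β hβ => ?_⟩
  refine ⟨if Even n then β else negLast n β, ?_, actD_wordD hn2 fun j => hβ.apply_eq_zero⟩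
  split_ifs
  · exact hβ
  · exact hβ.negLast

end
end
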